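/- Let 𝒢 = (V, E_1, …, E_ℓ) be a temporal graph and let 𝒢' = (V, E'_1, …, E'_{ℓ'}) be obtained from 𝒢 by inserting one trivial (edgeless) layer after every Δ consecutive layers; formally, E'_j = E_i if j = i + ⌈i/Δ⌉ - 1 for some i ∈ [ℓ] (equivalently j mod (Δ+1) ≠ 0 in the appropriate indexing), and E'_j = ∅ otherwise. Then 𝒢 contains a Δ-restless temporal (s,z)-path if and only if 𝒢' contains a (Δ+1)-restless temporal (s,z)-path. -/

import Mathlib

/-- A `Δ`-restless temporal `(s,z)`-path of length `k` in the temporal graph with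
layers `E : ℕ → Set (Sym2 V)`: vertices `v 0 = s, …, v k = z` pairwise distinct,
transition `i` uses edge `{v (i-1), v i}` at time `t i ≥ 1`, time stamps are
non-decreasing and consecutive stamps differ by at most `Δ`. -/
def IsRestlessTemporalPath {V : Type*} (E : ℕ → Set (Sym2 V)) (Δ : ℕ)
    (s z : V) (k : ℕ) (v : ℕ → V) (t : ℕ → ℕ) : Prop :=
  v 0 = s ∧ v k = z ∧
  (∀ i j, i ≤ k → j ≤ k → v i = v j → i = j) ∧
  (∀ i, 1 ≤ i → i ≤ k → 1 ≤ t i ∧ Sym2.mk (v (i - 1)) (v i) ∈ E (t i)) ∧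
  (∀ i, 1 ≤ i → i < k → t i ≤ t (i + 1) ∧ t (i + 1) ≤ t i + Δ)

/-- A (not necessarily restless) temporal `(s,z)`-path. -/
def IsTemporalPath {V : Type*} (E : ℕ → Set (Sym2 V))
    (s z : V) (k : ℕ) (v : ℕ → V) (t : ℕ → ℕ) : Prop :=
  v 0 = s ∧ v k = z ∧
  (∀ i j, i ≤ k → j ≤ k → v i = v j → i = j) ∧
  (∀ i, 1 ≤ i → i ≤ k → 1 ≤ t i ∧ Sym2.mk (v (i - 1)) (v i) ∈ E (t i)) ∧
  (∀ i, 1 ≤ i → i < k → t i ≤ t (i + 1))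

/-- All time stamps of the path lie within the lifetime `ℓ`. -/
def WithinLifetime (ℓ k : ℕ) (t : ℕ → ℕ) : Prop :=
  ∀ i, 1 ≤ i → i ≤ k → t i ≤ ℓ

/-- The underlying (static) graph of a temporal graph. -/
def underlyingGraph {V : Type*} (E : ℕ → Set (Sym2 V)) : SimpleGraph V where
  Adj a b := a ≠ b ∧ ∃ τ, Sym2.mk a b ∈ E τ
  symm := ⟨by
    rintro a b ⟨hab, τ, hτ⟩
    exact ⟨hab.symm, τ, by rwa [Sym2.eq_swap] at hτ⟩⟩
  loopless := ⟨fun a h => h.1 rfl⟩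

/-- inserting one trivial (edgeless) layer after every `Δ` consecutive
layers (the old layer `i ≥ 1` becomes layer `i + (i-1)/Δ`, all other layers are empty)
turns `Δ`-restless temporal `(s,z)`-paths into `(Δ+1)`-restless ones and vice versa. -/
theorem restless_delta_succ_of_trivial_layers {V : Type*}
    (E E' : ℕ → Set (Sym2 V)) (Δ : ℕ) (hΔ : 1 ≤ Δ) (s z : V)
    (hE1 : ∀ i, 1 ≤ i → E' (i + (i - 1) / Δ) = E i)
    (hE2 : ∀ j, (¬ ∃ i, 1 ≤ i ∧ j = i + (i - 1) / Δ) → E' j = ∅) :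
    (∃ k v t, IsRestlessTemporalPath E Δ s z k v t) ↔
    (∃ k v t, IsRestlessTemporalPath E' (Δ + 1) s z k v t) := by
  classical
  have hΔ0 : 0 < Δ := hΔ
  -- f n = n + (n-1)/Δ
  have fmono : ∀ a b : ℕ, a ≤ b → a + (a - 1) / Δ ≤ b + (b - 1) / Δ := fun a b h =>
    Nat.add_le_add h (Nat.div_le_div_right (Nat.sub_le_sub_right h 1))
  have fstrict : ∀ a b : ℕ, a < b → a + (a - 1) / Δ < b + (b - 1) / Δ := fun a b h =>
    Nat.add_lt_add_of_lt_of_le h (Nat.div_le_div_right (Nat.sub_le_sub_right h.le 1))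
  have fshift : ∀ n : ℕ, 1 ≤ n → (n + Δ) + ((n + Δ) - 1) / Δ = (n + (n - 1) / Δ) + (Δ + 1) := by
    intro n hn
    have h1 : n + Δ - 1 = (n - 1) + Δ := by omega
    rw [h1, Nat.add_div_right _ hΔ0]
    omega
  have flower : ∀ n : ℕ, 1 ≤ n → (n + (n - 1) / Δ) + (Δ + 2) ≤ (n + Δ + 1) + ((n + Δ + 1) - 1) / Δ := by
    intro n hn
    have h1 : ((n - 1) + Δ) / Δ ≤ (n + Δ + 1 - 1) / Δ := Nat.div_le_div_right (by omega)
    rw [Nat.add_div_right _ hΔ0] at h1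
    omega
  constructor
  · rintro ⟨k, v, t, h0, hk, hinj, hedge, hrest⟩
    refine ⟨k, v, fun i => t i + (t i - 1) / Δ, h0, hk, hinj, ?_, ?_⟩
    · intro i h1 h2
      obtain ⟨ht1, hte⟩ := hedge i h1 h2
      exact ⟨le_trans ht1 (Nat.le_add_right _ _), by rw [hE1 (t i) ht1]; exact hte⟩
    · intro i h1 h2
      obtain ⟨hle, hub⟩ := hrest i h1 h2
      have ht1 : 1 ≤ t i := (hedge i h1 (le_of_lt h2)).1
      refine ⟨fmono _ _ hle, ?_⟩
      calc t (i + 1) + (t (i + 1) - 1) / Δ ≤ (t i + Δ) + ((t i + Δ) - 1) / Δ := fmono _ _ hub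
        _ = (t i + (t i - 1) / Δ) + (Δ + 1) := fshift _ ht1
  · rintro ⟨k, v, t, h0, hk, hinj, hedge, hrest⟩
    set P : ℕ → Prop := fun j => ∃ n, 1 ≤ n ∧ j = n + (n - 1) / Δ with hP
    have hPt : ∀ i, 1 ≤ i → i ≤ k → P (t i) := by
      intro i h1 h2
      by_contra hc
      have := (hedge i h1 h2).2
      rw [hE2 (t i) hc] at this
      exact this
    set g : ℕ → ℕ := fun j => if h : P j then h.choose else 0 with hg
    have hgspec : ∀ j, P j → 1 ≤ g j ∧ j = g j + (g j - 1) / Δ := by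
      intro j hj
      simp only [hg, dif_pos hj]
      exact ⟨hj.choose_spec.1, hj.choose_spec.2⟩
    refine ⟨k, v, fun i => g (t i), h0, hk, hinj, ?_, ?_⟩
    · intro i h1 h2
      obtain ⟨hg1, hgeq⟩ := hgspec (t i) (hPt i h1 h2)
      refine ⟨hg1, ?_⟩
      have := (hedge i h1 h2).2
      rwa [hgeq, hE1 _ hg1] at this
    · intro i h1 h2
      obtain ⟨hg1, hgeq1⟩ := hgspec (t i) (hPt i h1 (le_of_lt h2))
      obtain ⟨hg2, hgeq2⟩ := hgspec (t (i + 1)) (hPt (i + 1) (by omega) h2)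
      obtain ⟨hle, hub⟩ := hrest i h1 h2
      constructor
      · by_contra hc
        push_neg at hc
        have := fstrict _ _ hc
        omega
      · by_contra hc
        push_neg at hc
        have hge : g (t i) + Δ + 1 ≤ g (t (i + 1)) := by omega
        have := fmono _ _ hge
        have hlow := flower (g (t i)) hg1
        omega
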